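/- Let x : [0,1] × [0,T] → ℝ² be C² in space and C¹ in time with |x_ρ| > 0, and suppose x(0,t)·e₁ = x(1,t)·e₁ = 0 for all t. Let ν = −(x_ρ/|x_ρ|)^⊥ and define the enclosed-volume functional V(t) = π ∫₀¹ (x·e₁)² ν·e₁ |x_ρ| dρ (equivalently V(t) = −π ∫₀¹ (x·e₁)² x_ρ·e₂ dρ). Then for all t ∈ (0,T), (d/dt) V(t) = 2π ∫₀¹ (x·e₁) x_t·ν |x_ρ| dρ. -/

import Mathlib

open Real MeasureTheory

/-- Clockwise rotation by π/2 in ℝ²: `(a,b)^⊥ = (b,−a)`. -/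
noncomputable def perp (v : EuclideanSpace ℝ (Fin 2)) : EuclideanSpace ℝ (Fin 2) :=
  WithLp.toLp 2 ![v 1, -v 0]

/-!
Since `ν·e₁ |x_ρ| = −x_ρ·e₂`, the volume is `V = −π ∫ (x·e₁)² x_ρ·e₂`. Differentiating under
the integral sign gives `−π ∫ 2 (x·e₁)(x_t·e₁)(x_ρ·e₂) + (x·e₁)² x_{tρ}·e₂`. Integrating the second
term by parts, the boundary term `(x·e₁)² x_t·e₂` vanishes because the curve ends on the axis,
and what remains is `−2π ∫ (x·e₁)((x_t·e₁)(x_ρ·e₂) − (x_ρ·e₁)(x_t·e₂))`. The bracket is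
`−(x_t·ν)|x_ρ|`, since `|x_ρ| ν = −x_ρ^⊥`.
-/

open Set Filter Topology Function intervalIntegral
open scoped Interval

section Perp

variable (v w : EuclideanSpace ℝ (Fin 2))

@[simp] lemma perp_apply_zero : perp v 0 = v 1 := rfl

@[simp] lemma perp_apply_one : perp v 1 = -v 0 := rfl

lemma perp_smul (c : ℝ) : perp (c • v) = c • perp v := by
  ext i; fin_cases i <;> simp [perp]

lemma inner_perp : inner ℝ w (perp v) = w 0 * v 1 - w 1 * v 0 := by
  simp [PiLp.inner_apply, Fin.sum_univ_two]; ring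

lemma norm_smul_neg_perp_normalize {v : EuclideanSpace ℝ (Fin 2)} (hv : v ≠ 0) :
    ‖v‖ • -perp (‖v‖⁻¹ • v) = -perp v := by
  rw [perp_smul, smul_neg, smul_smul, mul_inv_cancel₀ (norm_ne_zero_iff.2 hv), one_smul]

lemma neg_perp_normalize_apply_zero_mul_norm {v : EuclideanSpace ℝ (Fin 2)} (hv : v ≠ 0) :
    (-perp (‖v‖⁻¹ • v)) 0 * ‖v‖ = -v 1 := by
  rw [mul_comm, ← smul_eq_mul, ← PiLp.smul_apply, norm_smul_neg_perp_normalize hv]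
  simp

lemma inner_neg_perp_normalize_mul_norm {v : EuclideanSpace ℝ (Fin 2)} (hv : v ≠ 0) :
    inner ℝ w (-perp (‖v‖⁻¹ • v)) * ‖v‖ = w 1 * v 0 - w 0 * v 1 := by
  rw [mul_comm, ← real_inner_smul_right, norm_smul_neg_perp_normalize hv, inner_neg_right,
    inner_perp]
  ring

end Perp

lemma HasDerivAt.euclideanSpace_apply {ι : Type*} [Fintype ι] {f : ℝ → EuclideanSpace ℝ ι}
    {f' : EuclideanSpace ℝ ι} {t : ℝ} (h : HasDerivAt f f' t) (i : ι) :
    HasDerivAt (fun s => f s i) (f' i) t :=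
  ((EuclideanSpace.proj i).hasFDerivAt.comp_hasDerivAt t h :)

theorem hasDerivAt_integral_of_continuousOn {E : Type*} [NormedAddCommGroup E] [NormedSpace ℝ E]
    {F F' : ℝ → ℝ → E} {a b c d t₀ : ℝ} (ht₀ : t₀ ∈ Ioo c d)
    (hF : ∀ t ∈ Ioo c d, ContinuousOn (fun ρ => F ρ t) [[a, b]])
    (hF' : ContinuousOn (uncurry F') ([[a, b]] ×ˢ Icc c d))
    (hderiv : ∀ t ∈ Ioo c d, ∀ ρ ∈ [[a, b]], HasDerivAt (F ρ) (F' ρ t) t) :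
    HasDerivAt (fun t => ∫ ρ in a..b, F ρ t) (∫ ρ in a..b, F' ρ t₀) t₀ := by
  obtain ⟨C, hC⟩ := (isCompact_uIcc.prod isCompact_Icc).exists_bound_of_continuousOn hF'
  have hs : Ioo c d ∈ 𝓝 t₀ := isOpen_Ioo.mem_nhds ht₀
  refine (hasDerivAt_integral_of_dominated_loc_of_deriv_le (F := fun t ρ => F ρ t)
    (F' := fun t ρ => F' ρ t) (bound := fun _ => C) hs ?_
    (hF t₀ ht₀).intervalIntegrable ?_ ?_ intervalIntegrable_const ?_).2
  · filter_upwards [hs] with t ht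
    exact ((hF t ht).mono uIoc_subset_uIcc).aestronglyMeasurable measurableSet_uIoc
  · exact ((hF'.uncurry_right t₀ (Ioo_subset_Icc_self ht₀)).mono
      uIoc_subset_uIcc).aestronglyMeasurable measurableSet_uIoc
  · exact .of_forall fun ρ hρ t ht => hC (ρ, t) ⟨uIoc_subset_uIcc hρ, Ioo_subset_Icc_self ht⟩
  · exact .of_forall fun ρ hρ t ht => hderiv t ht ρ (uIoc_subset_uIcc hρ)

theorem hasDerivAt_integral_sq_mul {u uρ ut w v vρ : ℝ → ℝ → ℝ} {a b c d t₀ : ℝ}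
    (ht₀ : t₀ ∈ Ioo c d)
    (hu : ContinuousOn (uncurry u) ([[a, b]] ×ˢ Icc c d))
    (hut : ContinuousOn (uncurry ut) ([[a, b]] ×ˢ Icc c d))
    (hw : ContinuousOn (uncurry w) ([[a, b]] ×ˢ Icc c d))
    (hvρ : ContinuousOn (uncurry vρ) ([[a, b]] ×ˢ Icc c d))
    (huρ : ContinuousOn (fun ρ => uρ ρ t₀) [[a, b]])
    (hv : ContinuousOn (fun ρ => v ρ t₀) [[a, b]])
    (hu_t : ∀ t ∈ Ioo c d, ∀ ρ ∈ [[a, b]], HasDerivAt (u ρ) (ut ρ t) t)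
    (hw_t : ∀ t ∈ Ioo c d, ∀ ρ ∈ [[a, b]], HasDerivAt (w ρ) (vρ ρ t) t)
    (hu_ρ : ∀ ρ ∈ [[a, b]], HasDerivAt (fun r => u r t₀) (uρ ρ t₀) ρ)
    (hv_ρ : ∀ ρ ∈ [[a, b]], HasDerivAt (fun r => v r t₀) (vρ ρ t₀) ρ)
    (ha : u a t₀ = 0) (hb : u b t₀ = 0) :
    HasDerivAt (fun t => ∫ ρ in a..b, u ρ t ^ 2 * w ρ t)
      (2 * ∫ ρ in a..b, u ρ t₀ * (ut ρ t₀ * w ρ t₀ - uρ ρ t₀ * v ρ t₀)) t₀ := by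
  have hslice {f : ℝ → ℝ → ℝ} (hf : ContinuousOn (uncurry f) ([[a, b]] ×ˢ Icc c d)) {t : ℝ}
      (ht : t ∈ Ioo c d) : ContinuousOn (fun ρ => f ρ t) [[a, b]] :=
    hf.uncurry_right t (Ioo_subset_Icc_self ht)
  have hleibniz : HasDerivAt (fun t => ∫ ρ in a..b, u ρ t ^ 2 * w ρ t)
      (∫ ρ in a..b, 2 * u ρ t₀ * ut ρ t₀ * w ρ t₀ + u ρ t₀ ^ 2 * vρ ρ t₀) t₀ := by
    refine hasDerivAt_integral_of_continuousOn ht₀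
      (fun t ht => ((hslice hu ht).pow 2).mul (hslice hw ht))
      (F' := fun ρ t => 2 * u ρ t * ut ρ t * w ρ t + u ρ t ^ 2 * vρ ρ t)
      (by simp only [uncurry_def] at hu hut hw hvρ ⊢; fun_prop)
      fun t ht ρ hρ =>
        (((hu_t t ht ρ hρ).fun_pow 2).fun_mul (hw_t t ht ρ hρ)).congr_deriv (by ring)
  have hu₀ := hslice hu ht₀
  have hut₀ := hslice hut ht₀
  have hw₀ := hslice hw ht₀
  have hvρ₀ := hslice hvρ ht₀
  have hparts : ∫ ρ in a..b, u ρ t₀ ^ 2 * vρ ρ t₀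
      = -∫ ρ in a..b, 2 * u ρ t₀ * uρ ρ t₀ * v ρ t₀ := by
    have hsq (ρ) (hρ : ρ ∈ [[a, b]]) :
        HasDerivAt (fun r => u r t₀ ^ 2) (2 * u ρ t₀ * uρ ρ t₀) ρ := by
      simpa using (hu_ρ ρ hρ).fun_pow 2
    have := integral_mul_deriv_eq_deriv_mul hsq hv_ρ
      ((continuousOn_const.mul hu₀).mul huρ).intervalIntegrable hvρ₀.intervalIntegrable
    simpa [ha, hb] using this
  refine hleibniz.congr_deriv ?_
  rw [intervalIntegral.integral_add, hparts, ← sub_eq_add_neg, ← intervalIntegral.integral_sub,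
    ← intervalIntegral.integral_const_mul]
  · exact intervalIntegral.integral_congr fun ρ _ => by ring
  all_goals exact ContinuousOn.intervalIntegrable (by fun_prop)

theorem stmt_6_general
    (T : ℝ)
    (x xρ xt xtρ : ℝ → ℝ → EuclideanSpace ℝ (Fin 2))
    (ν : ℝ → ℝ → EuclideanSpace ℝ (Fin 2))
    -- spatial derivative and time derivative
    (hxρ : ∀ t ∈ Set.Icc 0 T, ∀ ρ ∈ Set.Icc (0:ℝ) 1, HasDerivAt (fun r => x r t) (xρ ρ t) ρ)
    (hxt : ∀ t ∈ Set.Ioo 0 T, ∀ ρ ∈ Set.Icc (0:ℝ) 1, HasDerivAt (fun s => x ρ s) (xt ρ t) t)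
    -- mixed second derivative (equality of the two mixed partials)
    (hxρt : ∀ t ∈ Set.Ioo 0 T, ∀ ρ ∈ Set.Icc (0:ℝ) 1, HasDerivAt (fun s => xρ ρ s) (xtρ ρ t) t)
    (hxtρ : ∀ t ∈ Set.Ioo 0 T, ∀ ρ ∈ Set.Icc (0:ℝ) 1, HasDerivAt (fun r => xt r t) (xtρ ρ t) ρ)
    -- continuity of the fields on [0,1] × [0,T]
    (hcx : ContinuousOn (fun p : ℝ × ℝ => x p.1 p.2) (Set.Icc 0 1 ×ˢ Set.Icc 0 T))
    (hcxρ : ContinuousOn (fun p : ℝ × ℝ => xρ p.1 p.2) (Set.Icc 0 1 ×ˢ Set.Icc 0 T))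
    (hcxt : ContinuousOn (fun p : ℝ × ℝ => xt p.1 p.2) (Set.Icc 0 1 ×ˢ Set.Icc 0 T))
    (hcxtρ : ContinuousOn (fun p : ℝ × ℝ => xtρ p.1 p.2) (Set.Icc 0 1 ×ˢ Set.Icc 0 T))
    (hpos : ∀ t ∈ Set.Icc 0 T, ∀ ρ ∈ Set.Icc (0:ℝ) 1, 0 < ‖xρ ρ t‖)
    -- the generating curve begins and ends on the axis of rotation
    (hbc0 : ∀ t ∈ Set.Icc 0 T, x 0 t 0 = 0)
    (hbc1 : ∀ t ∈ Set.Icc 0 T, x 1 t 0 = 0)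
    -- the unit normal
    (hν : ∀ ρ t, ν ρ t = -perp (‖xρ ρ t‖⁻¹ • xρ ρ t))
    (V : ℝ → ℝ)
    (hV : ∀ t, V t = π * ∫ ρ in (0:ℝ)..1, (x ρ t 0) ^ 2 * (ν ρ t 0) * ‖xρ ρ t‖) :
    ∀ t ∈ Set.Ioo 0 T,
      HasDerivAt V
        (2 * π * ∫ ρ in (0:ℝ)..1,
          (x ρ t 0) * (inner ℝ (xt ρ t) (ν ρ t) : ℝ) * ‖xρ ρ t‖) t := by
  intro t₀ ht₀
  have ht₀' : t₀ ∈ Icc 0 T := Ioo_subset_Icc_self ht₀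
  rw [← uIcc_of_le zero_le_one] at hxρ hxt hxρt hxtρ hcx hcxρ hcxt hcxtρ hpos
  have hxρ_ne (t) (ht : t ∈ Icc 0 T) (ρ) (hρ : ρ ∈ [[(0:ℝ), 1]]) : xρ ρ t ≠ 0 :=
    norm_pos_iff.1 (hpos t ht ρ hρ)
  have hVeq : V =ᶠ[𝓝 t₀] fun t => -π * ∫ ρ in (0:ℝ)..1, x ρ t 0 ^ 2 * xρ ρ t 1 := by
    filter_upwards [isOpen_Ioo.mem_nhds ht₀] with t ht
    rw [hV, neg_mul, ← mul_neg, ← intervalIntegral.integral_neg]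
    refine congrArg _ (intervalIntegral.integral_congr fun ρ hρ => ?_)
    rw [hν, mul_assoc,
      neg_perp_normalize_apply_zero_mul_norm (hxρ_ne t (Ioo_subset_Icc_self ht) ρ hρ), mul_neg]
  have hcomp {f : ℝ → ℝ → EuclideanSpace ℝ (Fin 2)}
      (hf : ContinuousOn (uncurry f) ([[0, 1]] ×ˢ Icc 0 T)) (i : Fin 2) :
      ContinuousOn (uncurry fun ρ t => f ρ t i) ([[0, 1]] ×ˢ Icc 0 T) :=
    (EuclideanSpace.proj i).continuous.comp_continuousOn hf
  have hderiv := hasDerivAt_integral_sq_mul ht₀ (hcomp hcx 0) (hcomp hcxt 0) (hcomp hcxρ 1)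
    (hcomp hcxtρ 1) ((hcomp hcxρ 0).uncurry_right t₀ ht₀') ((hcomp hcxt 1).uncurry_right t₀ ht₀')
    (fun t ht ρ hρ => (hxt t ht ρ hρ).euclideanSpace_apply 0)
    (fun t ht ρ hρ => (hxρt t ht ρ hρ).euclideanSpace_apply 1)
    (fun ρ hρ => (hxρ t₀ ht₀' ρ hρ).euclideanSpace_apply 0)
    (fun ρ hρ => (hxtρ t₀ ht₀ ρ hρ).euclideanSpace_apply 1)
    (hbc0 t₀ ht₀') (hbc1 t₀ ht₀')
  refine ((hderiv.const_mul (-π)).congr_of_eventuallyEq hVeq).congr_deriv ?_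
  have hintegral : ∫ ρ in (0:ℝ)..1, x ρ t₀ 0 * inner ℝ (xt ρ t₀) (ν ρ t₀) * ‖xρ ρ t₀‖
      = -∫ ρ in (0:ℝ)..1, x ρ t₀ 0 * (xt ρ t₀ 0 * xρ ρ t₀ 1 - xρ ρ t₀ 0 * xt ρ t₀ 1) := by
    rw [← intervalIntegral.integral_neg]
    refine intervalIntegral.integral_congr fun ρ hρ => ?_
    rw [hν, mul_assoc, inner_neg_perp_normalize_mul_norm _ (hxρ_ne t₀ ht₀' ρ hρ)]
    ring
  rw [hintegral]
  ring

/-- Let `x(ρ,t)`, `ρ ∈ [0,1]`, be a family of generating curves, C² in space and C¹ in time,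
with `|x_ρ| > 0`, beginning and ending on the axis of rotation:
`x(0,t)·e₁ = x(1,t)·e₁ = 0`.  With `ν = −(x_ρ/|x_ρ|)^⊥`, the enclosed volume
`V(t) = π ∫₀¹ (x·e₁)² ν·e₁ |x_ρ| dρ` satisfies
`(d/dt) V(t) = 2π ∫₀¹ (x·e₁) x_t·ν |x_ρ| dρ` for `t ∈ (0,T)`. -/
theorem stmt_6
    (T : ℝ) (hT : 0 < T)
    (x xρ xt xtρ : ℝ → ℝ → EuclideanSpace ℝ (Fin 2))
    (ν : ℝ → ℝ → EuclideanSpace ℝ (Fin 2))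
    -- spatial derivative and time derivative
    (hxρ : ∀ t ∈ Set.Icc 0 T, ∀ ρ ∈ Set.Icc (0:ℝ) 1, HasDerivAt (fun r => x r t) (xρ ρ t) ρ)
    (hxt : ∀ t ∈ Set.Ioo 0 T, ∀ ρ ∈ Set.Icc (0:ℝ) 1, HasDerivAt (fun s => x ρ s) (xt ρ t) t)
    -- mixed second derivative (equality of the two mixed partials)
    (hxρt : ∀ t ∈ Set.Ioo 0 T, ∀ ρ ∈ Set.Icc (0:ℝ) 1, HasDerivAt (fun s => xρ ρ s) (xtρ ρ t) t)
    (hxtρ : ∀ t ∈ Set.Ioo 0 T, ∀ ρ ∈ Set.Icc (0:ℝ) 1, HasDerivAt (fun r => xt r t) (xtρ ρ t) ρ)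
    -- continuity of the fields on [0,1] × [0,T]
    (hcx : ContinuousOn (fun p : ℝ × ℝ => x p.1 p.2) (Set.Icc 0 1 ×ˢ Set.Icc 0 T))
    (hcxρ : ContinuousOn (fun p : ℝ × ℝ => xρ p.1 p.2) (Set.Icc 0 1 ×ˢ Set.Icc 0 T))
    (hcxt : ContinuousOn (fun p : ℝ × ℝ => xt p.1 p.2) (Set.Icc 0 1 ×ˢ Set.Icc 0 T))
    (hcxtρ : ContinuousOn (fun p : ℝ × ℝ => xtρ p.1 p.2) (Set.Icc 0 1 ×ˢ Set.Icc 0 T))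
    (hpos : ∀ t ∈ Set.Icc 0 T, ∀ ρ ∈ Set.Icc (0:ℝ) 1, 0 < ‖xρ ρ t‖)
    -- the generating curve begins and ends on the axis of rotation
    (hbc0 : ∀ t ∈ Set.Icc 0 T, x 0 t 0 = 0)
    (hbc1 : ∀ t ∈ Set.Icc 0 T, x 1 t 0 = 0)
    -- the unit normal
    (hν : ∀ ρ t, ν ρ t = -perp (‖xρ ρ t‖⁻¹ • xρ ρ t))
    (V : ℝ → ℝ)
    (hV : ∀ t, V t = π * ∫ ρ in (0:ℝ)..1, (x ρ t 0) ^ 2 * (ν ρ t 0) * ‖xρ ρ t‖) :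
    ∀ t ∈ Set.Ioo 0 T,
      HasDerivAt V
        (2 * π * ∫ ρ in (0:ℝ)..1,
          (x ρ t 0) * (inner ℝ (xt ρ t) (ν ρ t) : ℝ) * ‖xρ ρ t‖) t :=
  stmt_6_general T x xρ xt xtρ ν hxρ hxt hxρt hxtρ hcx hcxρ hcxt hcxtρ hpos hbc0 hbc1 hν V hV
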